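/- Let F be a set functor and Λ a difunctionally functorial F-relator. Then Λ-similarity is sound and complete: for all F-coalgebras and all pairs of states, the states are Λ-similar if and only if they are behaviourally equivalent. -/

import Mathlib

open CategoryTheory Function

universe u

/-- Applicative composition of relations: `relComp s r = s · r`. -/
def relComp {X Y Z : Type u} (s : Y → Z → Prop) (r : X → Y → Prop) : X → Z → Prop :=
  fun x z => ∃ y, r x y ∧ s y z

/-- Converse of a relation. -/
def relConv {X Y : Type u} (r : X → Y → Prop) : Y → X → Prop := fun y x => r x y

/-- Graph relation of a function. -/
def fgraph {X Y : Type u} (f : X → Y) : X → Y → Prop := fun x y => f x = y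

/-- An `F`-relator: a monotone assignment of relations `F X ⇸ F Y` to relations `X ⇸ Y`. -/
structure Relator (F : Type u ⥤ Type u) : Type (u + 1) where
  map : ∀ {X Y : Type u}, (X → Y → Prop) → (F.obj X → F.obj Y → Prop)
  mono : ∀ {X Y : Type u} {r s : X → Y → Prop}, (∀ x y, r x y → s x y) →
    ∀ u v, map r u v → map s u v

/-- `f` is a coalgebra homomorphism from `(X, α)` to `(Y, β)`. -/
def IsCoalgHom (F : Type u ⥤ Type u) {X Y : Type u} (α : X → F.obj X) (β : Y → F.obj Y)
    (f : X → Y) : Prop :=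
  ∀ x, β (f x) = F.map (↾f) (α x)

/-- Behavioural equivalence of states. -/
def BehEq (F : Type u ⥤ Type u) {X Y : Type u} (α : X → F.obj X) (β : Y → F.obj Y)
    (x : X) (y : Y) : Prop :=
  ∃ (Z : Type u) (γ : Z → F.obj Z) (f : X → Z) (g : Y → Z),
    IsCoalgHom F α γ f ∧ IsCoalgHom F β γ g ∧ f x = g y

/-- `r` is a `Λ`-simulation from `(X, α)` to `(Y, β)`: `r ≤ β° · Λr · α`. -/
def IsSimulation {F : Type u ⥤ Type u} (Λ : Relator F) {X Y : Type u}
    (α : X → F.obj X) (β : Y → F.obj Y) (r : X → Y → Prop) : Prop :=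
  ∀ x y, r x y → Λ.map r (α x) (β y)

/-- `x` and `y` are `Λ`-similar: related by some `Λ`-simulation. -/
def LamSimilar {F : Type u ⥤ Type u} (Λ : Relator F) {X Y : Type u}
    (α : X → F.obj X) (β : Y → F.obj Y) (x : X) (y : Y) : Prop :=
  ∃ r, IsSimulation Λ α β r ∧ r x y

/-- An `F`-relator is difunctionally functorial if `Λ(g° · f) = (Fg)° · Ff` for all
functions `f : X → A`, `g : Y → A`. -/
def DifunFunctorial (F : Type u ⥤ Type u) (Λ : Relator F) : Prop :=
  ∀ {X Y A : Type u} (f : X → A) (g : Y → A) (u : F.obj X) (v : F.obj Y),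
    Λ.map (fun x y => f x = g y) u v ↔ F.map (↾f) u = F.map (↾g) v

/-!
A cospan of homomorphisms `f, g` into a common coalgebra yields the simulation
`{(x, y) | f x = g y}`: by difunctional functoriality, `Λ` of this relation is exactly
`{(u, v) | F f u = F g v}`. Conversely, a simulation `r` is glued into the quotient `Z` of
`X ⊕ Y` by `r`; by monotonicity `Λ r ≤ Λ {(x, y) | f x = g y}` for the two quotient maps,
so `F f (α x) = F g (β y)` whenever `r x y`, which makes the structure map on `Z` well
defined and the quotient maps homomorphisms.
-/

section

variable {F : Type u ⥤ Type u} {Λ : Relator F} {X Y : Type u}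
  {α : X → F.obj X} {β : Y → F.obj Y}

theorem isSimulation_of_isCoalgHom (hdf : DifunFunctorial F Λ) {Z : Type u}
    {γ : Z → F.obj Z} {f : X → Z} {g : Y → Z} (hf : IsCoalgHom F α γ f)
    (hg : IsCoalgHom F β γ g) : IsSimulation Λ α β (fun x y => f x = g y) := by
  intro x y hxy
  rw [hdf f g, ← hf x, ← hg y, hxy]

theorem map_eq_map_of_isSimulation (hdf : DifunFunctorial F Λ) {r : X → Y → Prop}
    (hr : IsSimulation Λ α β r) {A : Type u} {f : X → A} {g : Y → A}
    (hfg : ∀ x y, r x y → f x = g y) {x : X} {y : Y} (hxy : r x y) :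
    F.map (↾f) (α x) = F.map (↾g) (β y) :=
  (hdf f g _ _).mp (Λ.mono hfg _ _ (hr x y hxy))

def sumRel (r : X → Y → Prop) : X ⊕ Y → X ⊕ Y → Prop :=
  Sum.elim (fun x => Sum.elim (fun _ => False) (r x)) fun _ _ => False

theorem behEq_of_isSimulation (hdf : DifunFunctorial F Λ) {r : X → Y → Prop}
    (hr : IsSimulation Λ α β r) {x : X} {y : Y} (hxy : r x y) : BehEq F α β x y := by
  let f : X → Quot (sumRel r) := fun x => Quot.mk _ (Sum.inl x)
  let g : Y → Quot (sumRel r) := fun y => Quot.mk _ (Sum.inr y)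
  have hfg : ∀ x y, r x y → f x = g y := fun _ _ h => Quot.sound h
  let γ : Quot (sumRel r) → F.obj (Quot (sumRel r)) :=
    Quot.lift (Sum.elim (fun x => F.map (↾f) (α x)) fun y => F.map (↾g) (β y)) <| by
      rintro (_ | _) (_ | _) h
      · exact h.elim
      · exact map_eq_map_of_isSimulation hdf hr hfg h
      · exact h.elim
      · exact h.elim
  exact ⟨_, γ, f, g, fun _ => rfl, fun _ => rfl, hfg x y hxy⟩

end

/-- For a difunctionally functorial `F`-relator `Λ`, `Λ`-similarity
is sound and complete: two states are `Λ`-similar iff they are behaviourally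
equivalent. -/
theorem stmt2 (F : Type u ⥤ Type u) (Λ : Relator F) (hdf : DifunFunctorial F Λ)
    {X Y : Type u} (α : X → F.obj X) (β : Y → F.obj Y) (x : X) (y : Y) :
    LamSimilar Λ α β x y ↔ BehEq F α β x y := by
  constructor
  · rintro ⟨r, hr, hxy⟩
    exact behEq_of_isSimulation hdf hr hxy
  · rintro ⟨Z, γ, f, g, hf, hg, hxy⟩
    exact ⟨_, isSimulation_of_isCoalgHom hdf hf hg, hxy⟩
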